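/- Under the mixture setup, for any sequence (x_1, …, x_n) ⊂ [0, 1] one has P( (∩_{i=1}^n {X̃_i = x_i}) ∩ Ã ) = P( (∩_{i=1}^n {X̃_i = 1 − x_i}) ∩ Ã^c ). -/

import Mathlib

/-!
On `{U = 1}` the pair `(X̃, Ã)` is `(X, A)` and on `{U = 0}` it is `(1 - X, Aᶜ)`, and almost surely
`U ∈ {0, 1}`. Hence both sides split along the value of `U` into `P (E ∩ {U = 1}) + P (F ∩ {U = 0})`
and `P (F ∩ {U = 1}) + P (E ∩ {U = 0})`, with `E = {X = x} ∩ A` and `F = {X = 1 - x} ∩ Aᶜ`. Replacing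
each `X i` by the `G i`-measurable conditional expectation it equals a.e., `E` and `F` are independent
of `U`, so both sides equal `(P E + P F) / 2`.
-/

open MeasureTheory ProbabilityTheory MeasurableSpace

namespace ProbabilityTheory

variable {Ω : Type*} {m₁ m₂ : MeasurableSpace Ω} {mΩ : MeasurableSpace Ω} {P : Measure Ω}
  {S T E F : Set Ω}

theorem Indep.measure_inter_union_inter (h : Indep m₁ m₂ P) (hS : MeasurableSet[m₁] S)
    (hT : MeasurableSet[m₁] T) (hS' : MeasurableSet S) (hST : Disjoint S T)
    (hE : MeasurableSet[m₂] E) (hF : MeasurableSet[m₂] F) :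
    P ((S ∩ E) ∪ (T ∩ F)) = P S * P E + P T * P F := by
  have h_in : ((S ∩ E) ∪ (T ∩ F)) ∩ S = S ∩ E := by
    ext ω; have := hST.notMem_of_mem_left (a := ω); aesop
  have h_out : ((S ∩ E) ∪ (T ∩ F)) \ S = T ∩ F := by
    ext ω; have := hST.notMem_of_mem_right (a := ω); aesop
  rw [← measure_inter_add_sdiff (μ := P) _ hS', h_in, h_out, (Indep_iff _ _ _).1 h _ _ hS hE,
    (Indep_iff _ _ _).1 h _ _ hT hF]

theorem Indep.measure_inter_union_inter_comm (h : Indep m₁ m₂ P) (hS : MeasurableSet[m₁] S)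
    (hT : MeasurableSet[m₁] T) (hS' : MeasurableSet S) (hST : Disjoint S T) (hPST : P S = P T)
    (hE : MeasurableSet[m₂] E) (hF : MeasurableSet[m₂] F) :
    P ((S ∩ E) ∪ (T ∩ F)) = P ((S ∩ F) ∪ (T ∩ E)) := by
  rw [h.measure_inter_union_inter hS hT hS' hST hE hF,
    h.measure_inter_union_inter hS hT hS' hST hF hE, hPST, add_comm]

end ProbabilityTheory

theorem MeasureTheory.ae_mem_or_mem_of_measure_add_eq_one {Ω : Type*} {mΩ : MeasurableSpace Ω}
    {P : Measure Ω} [IsProbabilityMeasure P] {S T : Set Ω} (hS : MeasurableSet S)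
    (hT : MeasurableSet T) (hST : Disjoint S T) (h : P S + P T = 1) :
    ∀ᵐ ω ∂P, ω ∈ S ∨ ω ∈ T := by
  rw [← measure_union hST hT, ← prob_compl_eq_zero_iff (hS.union hT)] at h
  exact measure_eq_zero_iff_ae_notMem.1 h |>.mono fun ω hω => by
    simpa [or_iff_not_imp_left] using hω

theorem mixture_symmetry {Ω : Type} [mΩ : MeasurableSpace Ω] (P : Measure Ω)
    [IsProbabilityMeasure P] (n : ℕ)
    (A : Set Ω)
    (G : Fin n → MeasurableSpace Ω)
    (X : Fin n → Ω → ℝ)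
    (hX : ∀ i, X i =ᵐ[P] P[A.indicator (fun _ => (1 : ℝ)) | G i])
    (U : Ω → ℝ) (hU : Measurable U)
    (hU0 : P {ω | U ω = 0} = 1 / 2) (hU1 : P {ω | U ω = 1} = 1 / 2)
    (hindep : ProbabilityTheory.Indep (MeasurableSpace.comap U inferInstance)
      ((⨆ i, G i) ⊔ MeasurableSpace.generateFrom {A}) P)
    (Xt : Fin n → Ω → ℝ)
    (hXt : Xt = fun i ω => U ω * X i ω + (1 - U ω) * (1 - X i ω))
    (At : Set Ω) (hAt : At = (A ∩ {ω | U ω = 1}) ∪ (Aᶜ ∩ {ω | U ω = 0})) :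
    ∀ x : Fin n → ℝ, (∀ i, x i ∈ Set.Icc (0 : ℝ) 1) →
      P ((⋂ i, {ω | Xt i ω = x i}) ∩ At) = P ((⋂ i, {ω | Xt i ω = 1 - x i}) ∩ Atᶜ) := by
  intro x _
  set Y : Fin n → Ω → ℝ := fun i => P[A.indicator (fun _ => (1 : ℝ)) | G i]
  set m := (⨆ i, G i) ⊔ generateFrom {A}
  have hY : ∀ c : Fin n → ℝ, MeasurableSet[m] (⋂ i, {ω | Y i ω = c i}) := fun c =>
    .iInter fun i => le_sup_left (b := generateFrom {A}) _
      (le_iSup G i _ (stronglyMeasurable_condExp.measurable (measurableSet_singleton (c i))))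
  have hA : MeasurableSet[m] A := le_sup_right (a := ⨆ i, G i) _ (measurableSet_generateFrom rfl)
  set E := (⋂ i, {ω | Y i ω = x i}) ∩ A
  set F := (⋂ i, {ω | Y i ω = 1 - x i}) ∩ Aᶜ
  have hdisj : Disjoint {ω | U ω = 1} {ω | U ω = 0} :=
    Set.disjoint_left.2 fun ω h1 h0 => one_ne_zero (h1.symm.trans h0)
  have hXY : ∀ᵐ ω ∂P, ∀ i, X i ω = Y i ω := ae_all_iff.2 hX
  have hU01 : ∀ᵐ ω ∂P, ω ∈ {ω | U ω = 1} ∨ ω ∈ {ω | U ω = 0} :=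
    ae_mem_or_mem_of_measure_add_eq_one (hU (measurableSet_singleton 1))
      (hU (measurableSet_singleton 0)) hdisj
      (by rw [hU0, hU1, one_div, ENNReal.inv_two_add_inv_two])
  have h_lhs : ((⋂ i, {ω | Xt i ω = x i}) ∩ At : Set Ω) =ᵐ[P]
      ({ω | U ω = 1} ∩ E ∪ {ω | U ω = 0} ∩ F : Set Ω) := by
    refine Filter.eventuallyEq_set.2 ?_
    filter_upwards [hXY, hU01] with ω hω hUω
    rcases hUω with h | h <;>
      simp [hXt, hAt, E, F, h, hω, sub_eq_iff_eq_add', eq_sub_iff_add_eq, eq_comm (a := (1 : ℝ))]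
  have h_rhs : ((⋂ i, {ω | Xt i ω = 1 - x i}) ∩ Atᶜ : Set Ω) =ᵐ[P]
      ({ω | U ω = 1} ∩ F ∪ {ω | U ω = 0} ∩ E : Set Ω) := by
    refine Filter.eventuallyEq_set.2 ?_
    filter_upwards [hXY, hU01] with ω hω hUω
    rcases hUω with h | h <;> simp [hXt, hAt, E, F, h, hω]
  rw [measure_congr h_lhs, measure_congr h_rhs]
  exact hindep.measure_inter_union_inter_comm ⟨{1}, measurableSet_singleton 1, rfl⟩
    ⟨{0}, measurableSet_singleton 0, rfl⟩ (hU (measurableSet_singleton 1)) hdisj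
    (hU1.trans hU0.symm) ((hY x).inter hA) ((hY _).inter hA.compl)
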